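/- Let (R, m) be a discrete valuation ring of prime characteristic p > 0. Then the following are equivalent: (i) R is F-solid, i.e., R admits a nonzero p^{-1}-linear map; (ii) R is Frobenius split, i.e., R admits a p^{-1}-linear map φ with φ(1) = 1; (iii) R is split F-regular, i.e., for every nonzero c ∈ R there exist e ≥ 1 and an additive map φ : R → R with φ(a^{p^e} x) = a φ(x) for all a, x ∈ R and φ(c) = 1. -/

import Mathlib

universe u

/-!
The values of a `p⁻ᵉ`-linear map `φ` form an ideal, which in a PID is principal, say `(d)`;
dividing `φ` by `d` makes it surjective, and precomposing with multiplication by a preimage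
of `1` gives a splitting. For split F-regularity, given `c ≠ 0` and a splitting `φ`, the map
`φ(c ·)` hits `c = φ(c · c^(p-1))`, so its range `(d)` satisfies `d ∣ c`. If `c` and `d` are
associates, then `φ(c ·)/c` is defined and `x ↦ φ(c^(p-1) x)/c` sends `c` to `1`. Otherwise
`φ(c y) = d` for some `y`, and well-founded induction on strict divisibility provides a map
sending `d` to `1`, which we compose with `φ(y ·)`.
-/

/-- For `q = p ^ e` these are the `p⁻ᵉ`-linear maps. -/
def IsPInvLinear {R : Type*} [CommRing R] (q : ℕ) (φ : R →+ R) : Prop :=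
  ∀ a x : R, φ (a ^ q * x) = a * φ x

namespace IsPInvLinear

variable {R : Type*} [CommRing R] {q : ℕ} {φ : R →+ R}

theorem comp_mulLeft (hφ : IsPInvLinear q φ) (y : R) :
    IsPInvLinear q (φ.comp (AddMonoidHom.mulLeft y)) := fun a x => by
  show φ (y * (a ^ q * x)) = a * φ (y * x)
  rw [mul_left_comm, hφ]

theorem comp {r : ℕ} {θ : R →+ R} (hθ : IsPInvLinear q θ) (hφ : IsPInvLinear r φ) :
    IsPInvLinear (r * q) (θ.comp φ) := fun a x => by
  show θ (φ (a ^ (r * q) * x)) = a * θ (φ x)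
  rw [pow_mul', hφ, hθ]

theorem comp_iterateFrobenius (p n : ℕ) [ExpChar R p] (hφ : IsPInvLinear (q * p ^ n) φ) :
    IsPInvLinear q (φ.comp (iterateFrobenius R p n).toAddMonoidHom) := fun a x => by
  show φ (iterateFrobenius R p n (a ^ q * x)) = a * φ (iterateFrobenius R p n x)
  rw [map_mul, iterateFrobenius_def, iterateFrobenius_def, ← pow_mul, hφ]

theorem map_pow_eq_mul_map_one (hφ : IsPInvLinear q φ) (a : R) : φ (a ^ q) = a * φ 1 := by
  simpa using hφ a 1

def range (hφ : IsPInvLinear q φ) : Ideal R where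
  carrier := Set.range φ
  add_mem' := by
    rintro _ _ ⟨x, rfl⟩ ⟨y, rfl⟩
    exact ⟨x + y, map_add φ x y⟩
  zero_mem' := ⟨0, map_zero φ⟩
  smul_mem' := by
    rintro a _ ⟨x, rfl⟩
    exact ⟨a ^ q * x, hφ a x⟩

theorem exists_forall_dvd_map_and_eq_map [IsPrincipalIdealRing R] (hφ : IsPInvLinear q φ) :
    ∃ d : R, (∀ x, d ∣ φ x) ∧ ∃ y, φ y = d := by
  obtain ⟨d, hd⟩ := Submodule.IsPrincipal.principal hφ.range
  have hmem : ∀ z, z ∈ hφ.range ↔ d ∣ z := fun z => by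
    rw [hd, Ideal.submodule_span_eq, Ideal.mem_span_singleton]
  exact ⟨d, fun x => (hmem _).1 ⟨x, rfl⟩, (hmem d).2 dvd_rfl⟩

theorem exists_eq_mul [IsDomain R] (hφ : IsPInvLinear q φ) {d : R} (hd : d ≠ 0)
    (hdvd : ∀ x, d ∣ φ x) :
    ∃ ψ : R →+ R, IsPInvLinear q ψ ∧ ∀ x, φ x = d * ψ x := by
  choose ψ hψ using hdvd
  refine ⟨AddMonoidHom.mk' ψ fun x y => mul_left_cancel₀ hd ?_, fun a x =>
    mul_left_cancel₀ hd ?_, hψ⟩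
  · simp only [mul_add, ← hψ, map_add]
  · rw [AddMonoidHom.mk'_apply, ← hψ, mul_left_comm, ← hψ, hφ]

end IsPInvLinear

section SplittingOfPID

variable {R : Type*} [CommRing R] [IsDomain R] [IsPrincipalIdealRing R] {q : ℕ} {φ : R →+ R}

theorem IsPInvLinear.exists_map_one_eq_one_of_ne_zero (hφ : IsPInvLinear q φ) (hne : φ ≠ 0) :
    ∃ ψ : R →+ R, IsPInvLinear q ψ ∧ ψ 1 = 1 := by
  obtain ⟨d, hdvd, y, hy⟩ := hφ.exists_forall_dvd_map_and_eq_map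
  have hd : d ≠ 0 := by
    rintro rfl
    exact hne (AddMonoidHom.ext fun x => zero_dvd_iff.1 (hdvd x))
  obtain ⟨ψ, hψ, hφψ⟩ := hφ.exists_eq_mul hd hdvd
  refine ⟨ψ.comp (AddMonoidHom.mulLeft y), hψ.comp_mulLeft y, mul_left_cancel₀ hd ?_⟩
  simp [← hφψ, hy]

theorem IsPInvLinear.exists_map_eq_one_of_map_one_eq_one {p : ℕ} (hp : 2 ≤ p)
    (hφ : IsPInvLinear p φ) (h1 : φ 1 = 1) {c : R} (hc : c ≠ 0) :
    ∃ e : ℕ, 1 ≤ e ∧ ∃ θ : R →+ R, IsPInvLinear (p ^ e) θ ∧ θ c = 1 := by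
  induction c using WellFounded.induction (wellFounded_dvdNotUnit (α := R)) with
  | h c ih =>
  have hφc := hφ.comp_mulLeft c
  have hφc_pow : φ (c * c ^ (p - 1)) = c := by
    rw [← pow_succ', Nat.sub_add_cancel (by omega), hφ.map_pow_eq_mul_map_one, h1, mul_one]
  obtain ⟨d, hdvd, y, hy⟩ := hφc.exists_forall_dvd_map_and_eq_map
  obtain ⟨c', hcd⟩ : d ∣ c := hφc_pow ▸ hdvd (c ^ (p - 1))
  by_cases hc' : IsUnit c'
  · have hcdvd : ∀ x, c ∣ φ (c * x) := fun x =>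
      (Associated.dvd_iff_dvd_left ⟨hc'.unit, hcd.symm⟩).1 (hdvd x)
    obtain ⟨ψ, hψ, hφψ⟩ := hφc.exists_eq_mul hc hcdvd
    refine ⟨1, le_rfl, ψ.comp (AddMonoidHom.mulLeft (c ^ (p - 2))), ?_, ?_⟩
    · simpa using hψ.comp_mulLeft (c ^ (p - 2))
    · apply mul_left_cancel₀ hc
      have : c ^ (p - 2) * c = c ^ (p - 1) := by
        rw [← pow_succ]; congr 1; omega
      simp only [AddMonoidHom.comp_apply, AddMonoidHom.coe_mulLeft, this, mul_one]
      exact (hφψ _).symm.trans hφc_pow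
  · have hd : d ≠ 0 := left_ne_zero_of_mul (hcd ▸ hc)
    obtain ⟨e, he, τ, hτ, hτd⟩ := ih d ⟨hd, c', hc', hcd⟩ hd
    refine ⟨e + 1, by omega, τ.comp (φ.comp (AddMonoidHom.mulLeft y)), ?_, ?_⟩
    · simpa [pow_succ'] using hτ.comp (hφ.comp_mulLeft y)
    · show τ (φ (y * c)) = 1
      rw [mul_comm]
      exact (congrArg τ hy).trans hτd

end SplittingOfPID

/-- **For a DVR of prime characteristic, F-solid, Frobenius split and split F-regular are
equivalent.**  Let `(R, 𝔪)` be a discrete valuation ring of prime characteristic `p`.  Then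
the following are equivalent:
(i) `R` admits a nonzero `p⁻¹`-linear map;
(ii) `R` admits a `p⁻¹`-linear map `φ` with `φ 1 = 1` (Frobenius split);
(iii) for every nonzero `c ∈ R` there are `e ≥ 1` and an additive map `φ : R → R` with
`φ (a ^ (p ^ e) * x) = a * φ x` for all `a, x` and `φ c = 1` (split F-regular). -/
theorem dvr_fsolid_iff_frobenius_split_iff_split_F_regular
    (p : ℕ) [Fact p.Prime]
    (R : Type u) [CommRing R] [IsDomain R] [IsDiscreteValuationRing R] [CharP R p] :
    ((∃ φ : R →+ R, (∀ a x : R, φ (a ^ p * x) = a * φ x) ∧ φ ≠ 0) ↔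
      (∃ φ : R →+ R, (∀ a x : R, φ (a ^ p * x) = a * φ x) ∧ φ 1 = 1)) ∧
    ((∃ φ : R →+ R, (∀ a x : R, φ (a ^ p * x) = a * φ x) ∧ φ 1 = 1) ↔
      (∀ c : R, c ≠ 0 → ∃ e : ℕ, 1 ≤ e ∧ ∃ φ : R →+ R,
        (∀ a x : R, φ (a ^ p ^ e * x) = a * φ x) ∧ φ c = 1)) := by
  have hp : 2 ≤ p := (Fact.out : p.Prime).two_le
  constructor
  · exact ⟨fun ⟨φ, hφ, hne⟩ => IsPInvLinear.exists_map_one_eq_one_of_ne_zero hφ hne,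
      fun ⟨φ, hφ, h1⟩ => ⟨φ, hφ, fun h => by simp [h] at h1⟩⟩
  refine ⟨fun ⟨φ, hφ, h1⟩ _ hc =>
    IsPInvLinear.exists_map_eq_one_of_map_one_eq_one hp hφ h1 hc, fun h => ?_⟩
  obtain ⟨e, he, τ, hτ, hτ1⟩ := h 1 one_ne_zero
  obtain ⟨n, rfl⟩ : ∃ n, e = n + 1 := ⟨e - 1, by omega⟩
  refine ⟨_, IsPInvLinear.comp_iterateFrobenius p n (q := p) ?_, by simpa using hτ1⟩
  rwa [← pow_succ']
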